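/- Let d ≥ 2 and v₀, c₀ ∈ ℍ^∞ (C^∞, divergence-free, mean-zero vector fields on 𝕋^d). Then (v₀·∇)c₀ = (c₀·∇)v₀ if and only if 𝒫(v₀,c₀) = 𝒫(c₀,v₀), where 𝒫(v,w) := −𝔏((v·∇)w) and 𝔏 is the Leray projection. -/

import Mathlib

/-!
Common Fourier-side setting for the incompressible NS / MHD equations on the torus
𝕋^d = (ℝ/2πℤ)^d, following the paper's conventions.  A vector field (distribution)
`v` on 𝕋^d is encoded by its Fourier coefficients `F k ∈ ℂ^d` (`k ∈ ℤ^d`), with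
`v = Σ_k F k · e_k`, `e_k(x) = (2π)^{-d/2} e^{i k·x}`.
-/

open scoped BigOperators ENNReal
open Filter MeasureTheory

noncomputable section

namespace MHD

/-- ℂ^d. -/
abbrev Vec (d : ℕ) := Fin d → ℂ

/-- Fourier coefficients of a vector-valued distribution on 𝕋^d. -/
abbrev Coef (d : ℕ) := (Fin d → ℤ) → Vec d

/-- pairs (velocity field, magnetic field). -/
abbrev PCoef (d : ℕ) := Coef d × Coef d

/-- Euclidean norm `|k|` of a frequency `k ∈ ℤ^d`. -/
def knorm {d : ℕ} (k : Fin d → ℤ) : ℝ := Real.sqrt (∑ i, ((k i : ℝ)) ^ 2)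

/-- the weight `|k|^{2p}` (with the `k = 0` term put to `0`). -/
def wt {d : ℕ} (p : ℝ) (k : Fin d → ℤ) : ℝ := if k = 0 then 0 else knorm k ^ (2 * p)

def cNormSq {d : ℕ} (a : Vec d) : ℝ := ∑ i, Complex.normSq (a i)

def cInnerRe {d : ℕ} (a b : Vec d) : ℝ := ∑ i, ((starRingEnd ℂ) (a i) * b i).re

/-- `k · a = Σ_s k_s a_s`. -/
def kdotC {d : ℕ} (k : Fin d → ℤ) (a : Vec d) : ℂ := ∑ i, (k i : ℂ) * a i

/-- reality condition `v_{-k} = conj (v_k)` (i.e. the field is ℝ^d-valued). -/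
def isReal {d : ℕ} (F : Coef d) : Prop := ∀ k i, F (-k) i = (starRingEnd ℂ) (F k i)

/-- divergence-free condition `k · v_k = 0`. -/
def divFree {d : ℕ} (F : Coef d) : Prop := ∀ k, kdotC k (F k) = 0

/-- square of the Sobolev norm of order `p`. -/
def hNormSq {d : ℕ} (p : ℝ) (F : Coef d) : ℝ := ∑' k, wt p k * cNormSq (F k)

/-- the Sobolev norm `‖·‖_p` on ℍ^p. -/
def hNorm {d : ℕ} (p : ℝ) (F : Coef d) : ℝ := Real.sqrt (hNormSq p F)

/-- the Sobolev inner product `⟨·|·⟩_p` (real valued, for real fields). -/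
def hInner {d : ℕ} (p : ℝ) (F G : Coef d) : ℝ := ∑' k, wt p k * cInnerRe (F k) (G k)

def l2NormSq {d : ℕ} (F : Coef d) : ℝ := ∑' k, cNormSq (F k)

def l2Norm {d : ℕ} (F : Coef d) : ℝ := Real.sqrt (l2NormSq F)

/-- membership in `ℍ^p`: real, divergence free, zero mean, finite `p`-norm. -/
def memH {d : ℕ} (p : ℝ) (F : Coef d) : Prop :=
  isReal F ∧ divFree F ∧ F 0 = 0 ∧ Summable (fun k => wt p k * cNormSq (F k))

/-- membership in `ℍ^∞ = ∩_p ℍ^p`. -/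
def memHinf {d : ℕ} (F : Coef d) : Prop := ∀ p : ℝ, memH p F

/-- membership in `ℍ₀^∞` (smooth, zero mean; no divergence condition). -/
def memH0inf {d : ℕ} (F : Coef d) : Prop :=
  isReal F ∧ F 0 = 0 ∧ ∀ p : ℝ, Summable (fun k => wt p k * cNormSq (F k))

/-- the Leray projection, acting Fourier-mode-wise as the projection onto `k^⊥`. -/
def leray {d : ℕ} (k : Fin d → ℤ) (a : Vec d) : Vec d :=
  if k = 0 then a else fun i => a i - kdotC k a / ((knorm k : ℂ)) ^ 2 * (k i : ℂ)

/-- Fourier coefficients of the advection term `(v·∇)w`. -/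
def advC {d : ℕ} (V W : Coef d) : Coef d := fun m i =>
  (((2 * Real.pi) ^ (-(d : ℝ) / 2) : ℝ) : ℂ) *
    ∑' l : Fin d → ℤ, Complex.I * kdotC l (V (m - l)) * W l i

/-- the fundamental NS bilinear map `𝒫(v,w) = −𝔏((v·∇)w)`. -/
def Pns {d : ℕ} (V W : Coef d) : Coef d := fun k i => - leray k (advC V W k) i

def pNormSq {d : ℕ} (p : ℝ) (V : PCoef d) : ℝ := hNormSq p V.1 + hNormSq p V.2

/-- the Sobolev norm on `𝐇^p = ℍ^p × ℍ^p`. -/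
def pNorm {d : ℕ} (p : ℝ) (V : PCoef d) : ℝ := Real.sqrt (pNormSq p V)

def pInner {d : ℕ} (p : ℝ) (V W : PCoef d) : ℝ := hInner p V.1 W.1 + hInner p V.2 W.2

def pl2Norm {d : ℕ} (V : PCoef d) : ℝ := Real.sqrt (l2NormSq V.1 + l2NormSq V.2)

def memPH {d : ℕ} (p : ℝ) (V : PCoef d) : Prop := memH p V.1 ∧ memH p V.2

def memPHinf {d : ℕ} (V : PCoef d) : Prop := memHinf V.1 ∧ memHinf V.2

def pSub {d : ℕ} (V W : PCoef d) : PCoef d :=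
  (fun k i => V.1 k i - W.1 k i, fun k i => V.2 k i - W.2 k i)

/-- the fundamental MHD bilinear map `𝒫̂`. -/
def Phat {d : ℕ} (V W : PCoef d) : PCoef d :=
  (fun k i => Pns V.1 W.1 k i - Pns V.2 W.2 k i,
   fun k i => Pns V.1 W.2 k i - Pns V.2 W.1 k i)

/-- the linear operator `𝒜(v,c) = (νΔv, ηΔc)`. -/
def Aop {d : ℕ} (ν η : ℝ) (V : PCoef d) : PCoef d :=
  (fun k i => ((-(ν * knorm k ^ 2) : ℝ) : ℂ) * V.1 k i,
   fun k i => ((-(η * knorm k ^ 2) : ℝ) : ℂ) * V.2 k i)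

/-- `(−Δ)^{p/2}` on mean-zero fields. -/
def fracLap {d : ℕ} (p : ℝ) (F : Coef d) : Coef d :=
  fun k i => if k = 0 then 0 else ((knorm k ^ p : ℝ) : ℂ) * F k i

/-- the time domain `[0,T)`, `T ∈ (0,+∞]`. -/
def tdom (T : ℝ≥0∞) : Set ℝ := {t : ℝ | 0 ≤ t ∧ ENNReal.ofReal t < T}

/-- a (C^∞) solution of the MHD equations on `[0,T)` with values in `𝐇^∞`. -/
structure IsMHDSol {d : ℕ} (ν η : ℝ) (T : ℝ≥0∞) (U : ℝ → PCoef d) : Prop where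
  Tpos : T ≠ 0
  mem : ∀ t ∈ tdom T, memPHinf (U t)
  smooth₁ : ∀ k i, ContDiffOn ℝ (⊤ : ℕ∞) (fun t => (U t).1 k i) (tdom T)
  smooth₂ : ∀ k i, ContDiffOn ℝ (⊤ : ℕ∞) (fun t => (U t).2 k i) (tdom T)
  ode₁ : ∀ t ∈ tdom T, ∀ k i, HasDerivWithinAt (fun s => (U s).1 k i)
    (((-(ν * knorm k ^ 2) : ℝ) : ℂ) * (U t).1 k i + (Phat (U t) (U t)).1 k i) (tdom T) t
  ode₂ : ∀ t ∈ tdom T, ∀ k i, HasDerivWithinAt (fun s => (U s).2 k i)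
    (((-(η * knorm k ^ 2) : ℝ) : ℂ) * (U t).2 k i + (Phat (U t) (U t)).2 k i) (tdom T) t

/-- the maximal (not extendable) solution of the MHD Cauchy problem with datum `U0`. -/
def IsMaxMHDSol {d : ℕ} (ν η : ℝ) (T : ℝ≥0∞) (U : ℝ → PCoef d) (U0 : PCoef d) : Prop :=
  IsMHDSol ν η T U ∧ U 0 = U0 ∧
    ∀ (T' : ℝ≥0∞) (U' : ℝ → PCoef d), IsMHDSol ν η T' U' → U' 0 = U0 → T' ≤ T

/-- a (C^∞) solution of the NS equation on `[0,T)` with values in `ℍ^∞`. -/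
structure IsNSSol {d : ℕ} (ν : ℝ) (T : ℝ≥0∞) (U : ℝ → Coef d) : Prop where
  Tpos : T ≠ 0
  mem : ∀ t ∈ tdom T, memHinf (U t)
  smooth : ∀ k i, ContDiffOn ℝ (⊤ : ℕ∞) (fun t => U t k i) (tdom T)
  ode : ∀ t ∈ tdom T, ∀ k i, HasDerivWithinAt (fun s => U s k i)
    (((-(ν * knorm k ^ 2) : ℝ) : ℂ) * U t k i + Pns (U t) (U t) k i) (tdom T) t

/-- a global, decaying MHD solution. -/
def IsGlobalDecayingMHD {d : ℕ} (ν η : ℝ) (V : ℝ → PCoef d) : Prop :=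
  IsMHDSol ν η ⊤ V ∧ ∃ n : ℝ, (d : ℝ) / 2 + 1 < n ∧
    Tendsto (fun t => pNorm n (V t)) atTop (nhds 0)

/-- `E^∞`: the set of initial data whose maximal MHD solution is global and decaying. -/
def memEinf {d : ℕ} (ν η : ℝ) (V0 : PCoef d) : Prop :=
  memPHinf V0 ∧ ∃ V : ℝ → PCoef d, IsMaxMHDSol ν η ⊤ V V0 ∧
    ∃ n : ℝ, (d : ℝ) / 2 + 1 < n ∧ Tendsto (fun t => pNorm n (V t)) atTop (nhds 0)

/-- an approximate solution of the MHD Cauchy problem: any `C¹` map `[0,Tₐ) → 𝐇^∞`. -/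
structure IsApproxMHDSol {d : ℕ} (Ta : ℝ≥0∞) (Ua : ℝ → PCoef d) : Prop where
  Tpos : Ta ≠ 0
  mem : ∀ t ∈ tdom Ta, memPHinf (Ua t)
  smooth₁ : ∀ k i, ContDiffOn ℝ 1 (fun t => (Ua t).1 k i) (tdom Ta)
  smooth₂ : ∀ k i, ContDiffOn ℝ 1 (fun t => (Ua t).2 k i) (tdom Ta)

/-- the differential error `e(𝐮ₐ) = d𝐮ₐ/dt − 𝒜𝐮ₐ − 𝒫̂(𝐮ₐ,𝐮ₐ)` of an approximate solution. -/
def diffErr {d : ℕ} (ν η : ℝ) (Ta : ℝ≥0∞) (Ua : ℝ → PCoef d) (t : ℝ) : PCoef d :=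
  (fun k i => derivWithin (fun s => (Ua s).1 k i) (tdom Ta) t
      + ((ν * knorm k ^ 2 : ℝ) : ℂ) * (Ua t).1 k i - (Phat (Ua t) (Ua t)).1 k i,
   fun k i => derivWithin (fun s => (Ua s).2 k i) (tdom Ta) t
      + ((η * knorm k ^ 2 : ℝ) : ℂ) * (Ua t).2 k i - (Phat (Ua t) (Ua t)).2 k i)

/-- right upper Dini derivative (valued in `EReal`). -/
def diniUpperE (f : ℝ → ℝ) (t : ℝ) : EReal :=
  Filter.limsup (fun h : ℝ => (((f (t + h) - f t) / h : ℝ) : EReal)) (nhdsWithin 0 (Set.Ioi 0))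

/-- value at `x ∈ 𝕋^d` of the derivative `∂^α` of the field with Fourier coefficients `F`. -/
def fourierDerivEval {d : ℕ} (F : Coef d) (α : Fin d → ℕ) (x : Fin d → ℝ) (i : Fin d) : ℂ :=
  ∑' k : Fin d → ℤ, (∏ j, (Complex.I * (k j : ℂ)) ^ (α j)) * F k i *
    Complex.exp (Complex.I * ∑ j, (k j : ℂ) * (x j : ℂ)) *
    (((2 * Real.pi) ^ (-(d : ℝ) / 2) : ℝ) : ℂ)

/-- the `C^r` norm: sup over `x` and over all derivatives of order `≤ r`. -/
def crNorm {d : ℕ} (r : ℕ) (F : Coef d) : ℝ :=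
  ⨆ (α : {a : Fin d → ℕ // (∑ j, a j) ≤ r}) (x : Fin d → ℝ),
    Real.sqrt (∑ i, Complex.normSq (fourierDerivEval F α.1 x i))

/-- the `C^r` norm of a pair: `‖(v,c)‖_{C^r} = max(‖v‖_{C^r}, ‖c‖_{C^r})`. -/
def pcrNorm {d : ℕ} (r : ℕ) (V : PCoef d) : ℝ := max (crNorm r V.1) (crNorm r V.2)

/-- `k × a` for `d = 3` (Fourier side of the curl: `(rot w)_k = i k × w_k`). -/
def crossC (k : Fin 3 → ℤ) (a : Vec 3) : Vec 3 := fun i =>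
  (k (i + 1) : ℂ) * a (i + 2) - (k (i + 2) : ℂ) * a (i + 1)

/-- a generalized Beltrami flow: `w₀ ∈ ℍ^∞`, `Δw₀ = −κ²w₀` (κ ≥ 1), `𝒫(w₀,w₀) = 0`. -/
def IsGenBeltrami {d : ℕ} (F : Coef d) (κ : ℝ) : Prop :=
  memHinf F ∧ 1 ≤ κ ∧
    (∀ k i, ((-(knorm k ^ 2) : ℝ) : ℂ) * F k i = ((-(κ ^ 2) : ℝ) : ℂ) * F k i) ∧
    ∀ k i, Pns F F k i = 0

/-- a generalized Beltrami pair. -/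
def IsGenBeltramiPair {d : ℕ} (F G : Coef d) (κ lam : ℝ) : Prop :=
  IsGenBeltrami F κ ∧ IsGenBeltrami G lam ∧ ∀ k i, advC F G k i = advC G F k i

end MHD

open MHD

private lemma MHD.cNormSq_nonneg {d : ℕ} (a : Vec d) : 0 ≤ cNormSq a :=
  Finset.sum_nonneg fun _ _ => Complex.normSq_nonneg _

private lemma MHD.kdotC_zero_left {d : ℕ} (a : Vec d) : kdotC (0 : Fin d → ℤ) a = 0 := by
  simp [kdotC]

private lemma MHD.kdotC_sub {d : ℕ} (k l : Fin d → ℤ) (a : Vec d) :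
    kdotC (k - l) a = kdotC k a - kdotC l a := by
  simp only [kdotC, Pi.sub_apply, Int.cast_sub, sub_mul, Finset.sum_sub_distrib]

private lemma MHD.norm_apply_le {d : ℕ} (a : Vec d) (i : Fin d) :
    ‖a i‖ ≤ Real.sqrt (cNormSq a) := by
  rw [show ‖a i‖ = Real.sqrt (Complex.normSq (a i)) by
    rw [Complex.norm_def]]
  exact Real.sqrt_le_sqrt (Finset.single_le_sum (f := fun j => Complex.normSq (a j))
    (fun _ _ => Complex.normSq_nonneg _) (Finset.mem_univ i))

private lemma MHD.int_abs_le_knorm {d : ℕ} (l : Fin d → ℤ) (i : Fin d) :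
    |(l i : ℝ)| ≤ knorm l := by
  rw [← Real.sqrt_sq_eq_abs]
  exact Real.sqrt_le_sqrt (Finset.single_le_sum (f := fun j => ((l j : ℝ)) ^ 2)
    (fun _ _ => sq_nonneg _) (Finset.mem_univ i))

private lemma MHD.knorm_nonneg {d : ℕ} (l : Fin d → ℤ) : 0 ≤ knorm l := Real.sqrt_nonneg _

private lemma MHD.norm_kdotC_le {d : ℕ} (l : Fin d → ℤ) (a : Vec d) :
    ‖kdotC l a‖ ≤ (d : ℝ) * (knorm l * Real.sqrt (cNormSq a)) := by
  calc ‖kdotC l a‖ ≤ ∑ i, ‖(l i : ℂ) * a i‖ := norm_sum_le _ _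
    _ ≤ ∑ _i : Fin d, knorm l * Real.sqrt (cNormSq a) := by
        apply Finset.sum_le_sum
        intro i _
        rw [norm_mul]
        have h1 : ‖(l i : ℂ)‖ ≤ knorm l := by
          rw [show ((l i : ℂ)) = (((l i : ℝ)) : ℂ) by push_cast; ring, Complex.norm_real,
            Real.norm_eq_abs]
          exact int_abs_le_knorm l i
        exact mul_le_mul h1 (norm_apply_le a i) (norm_nonneg _)
          (knorm_nonneg l)
    _ = (d : ℝ) * (knorm l * Real.sqrt (cNormSq a)) := by
        rw [Finset.sum_const, Finset.card_univ, Fintype.card_fin, nsmul_eq_mul]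

private lemma MHD.summable_cNormSq {d : ℕ} {F : Coef d} (hF : memHinf F) :
    Summable (fun l => cNormSq (F l)) := by
  have h := (hF 0).2.2.2
  have heq : (fun l => wt 0 l * cNormSq (F l)) = fun l => cNormSq (F l) := by
    funext l
    by_cases hl : l = 0
    · subst hl
      simp [wt, (hF 0).2.2.1, cNormSq]
    · simp [wt, hl]
  rwa [heq] at h

private lemma MHD.advC_summable {d : ℕ} {F G : Coef d} (hF : memHinf F) (hG : memHinf G)
    (k : Fin d → ℤ) (i : Fin d) :
    Summable (fun l : Fin d → ℤ => Complex.I * kdotC l (F (k - l)) * G l i) := by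
  have hFs0 := ((Equiv.subLeft k).summable_iff
    (f := fun m : Fin d → ℤ => cNormSq (F m))).mpr (summable_cNormSq hF)
  have hFs : Summable (fun l => cNormSq (F (k - l))) := by
    simpa [Function.comp_def] using hFs0
  have hGs : Summable (fun l => wt 1 l * cNormSq (G l)) := (hG 1).2.2.2
  refine Summable.of_norm_bounded
    (g := fun l => ((d : ℝ) / 2) * (cNormSq (F (k - l)) + wt 1 l * cNormSq (G l)))
    ((hFs.add hGs).mul_left ((d : ℝ) / 2)) ?_
  intro l
  by_cases hl : l = 0
  · subst hl
    rw [kdotC_zero_left]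
    simp only [mul_zero, zero_mul, norm_zero]
    have h1 : (0:ℝ) ≤ cNormSq (F (k - 0)) := cNormSq_nonneg _
    have h2 : wt 1 (0 : Fin d → ℤ) = 0 := by simp [wt]
    have hd2 : (0:ℝ) ≤ (d:ℝ)/2 := by positivity
    rw [h2, zero_mul, add_zero]
    exact mul_nonneg hd2 h1
  · have hterm : ‖Complex.I * kdotC l (F (k - l)) * G l i‖
        ≤ ((d : ℝ) * (knorm l * Real.sqrt (cNormSq (F (k - l))))) * Real.sqrt (cNormSq (G l)) := by
      rw [norm_mul, norm_mul, Complex.norm_I, one_mul]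
      exact mul_le_mul (norm_kdotC_le l _) (norm_apply_le _ _) (norm_nonneg _)
        (mul_nonneg (Nat.cast_nonneg d) (mul_nonneg (knorm_nonneg l) (Real.sqrt_nonneg _)))
    have hwt : wt 1 l = knorm l ^ 2 := by
      rw [wt, if_neg hl, mul_one, show (2 : ℝ) = ((2 : ℕ) : ℝ) by norm_num,
        Real.rpow_natCast]
    set A := cNormSq (F (k - l)) with hA
    set B := cNormSq (G l) with hB
    have hA0 : 0 ≤ A := cNormSq_nonneg _
    have hB0 : 0 ≤ B := cNormSq_nonneg _
    have hk0 : 0 ≤ knorm l := knorm_nonneg l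
    have key : (knorm l * Real.sqrt A) * Real.sqrt B ≤ (A + knorm l ^ 2 * B) / 2 := by
      nlinarith [sq_nonneg (Real.sqrt A - knorm l * Real.sqrt B), Real.sq_sqrt hA0,
        Real.sq_sqrt hB0, Real.sqrt_nonneg A, Real.sqrt_nonneg B,
        mul_nonneg hk0 (Real.sqrt_nonneg B)]
    calc ‖Complex.I * kdotC l (F (k - l)) * G l i‖
        ≤ ((d : ℝ) * (knorm l * Real.sqrt A)) * Real.sqrt B := hterm
      _ = (d : ℝ) * ((knorm l * Real.sqrt A) * Real.sqrt B) := by ring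
      _ ≤ (d : ℝ) * ((A + knorm l ^ 2 * B) / 2) := by
          apply mul_le_mul_of_nonneg_left key (by positivity)
      _ = ((d : ℝ) / 2) * (A + wt 1 l * B) := by rw [hwt]; ring

private lemma MHD.sum_k_mul {d : ℕ} (k : Fin d → ℤ) (c : ℂ) (w : Vec d) :
    ∑ i, (k i : ℂ) * (c * w i) = c * kdotC k w := by
  unfold kdotC
  rw [Finset.mul_sum]
  exact Finset.sum_congr rfl fun i _ => by ring

private lemma MHD.kdot_advC {d : ℕ} {V W : Coef d} (hV : memHinf V) (hW : memHinf W)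
    (k : Fin d → ℤ) :
    kdotC k (advC V W k) = (((2 * Real.pi) ^ (-(d : ℝ) / 2) : ℝ) : ℂ) *
      ∑' l : Fin d → ℤ, Complex.I * kdotC l (V (k - l)) * kdotC (k - l) (W l) := by
  set C : ℂ := (((2 * Real.pi) ^ (-(d : ℝ) / 2) : ℝ) : ℂ)
  have step1 : kdotC k (advC V W k)
      = C * ∑ i : Fin d, ∑' l : Fin d → ℤ,
        (k i : ℂ) * (Complex.I * kdotC l (V (k - l)) * W l i) := by
    rw [kdotC, Finset.mul_sum]
    apply Finset.sum_congr rfl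
    intro i _
    rw [advC, tsum_mul_left]
    ring
  rw [step1]
  have step2 : ∑ i : Fin d, ∑' l : Fin d → ℤ,
        (k i : ℂ) * (Complex.I * kdotC l (V (k - l)) * W l i)
      = ∑' l : Fin d → ℤ, ∑ i : Fin d,
        (k i : ℂ) * (Complex.I * kdotC l (V (k - l)) * W l i) := by
    refine (Summable.tsum_finsetSum ?_).symm
    intro i _
    exact (advC_summable hV hW k i).mul_left _
  rw [step2]
  congr 1
  apply tsum_congr
  intro l
  have hsum : ∑ i : Fin d, (k i : ℂ) * (Complex.I * kdotC l (V (k - l)) * W l i)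
      = Complex.I * kdotC l (V (k - l)) * kdotC k (W l) :=
    sum_k_mul k _ (W l)
  rw [hsum, kdotC_sub, (hW 0).2.1 l, sub_zero]

private lemma MHD.kdot_advC_symm {d : ℕ} {F G : Coef d} (hF : memHinf F) (hG : memHinf G)
    (k : Fin d → ℤ) : kdotC k (advC F G k) = kdotC k (advC G F k) := by
  rw [kdot_advC hF hG k, kdot_advC hG hF k]
  congr 1
  rw [← (Equiv.subLeft k).tsum_eq
    (fun l => Complex.I * kdotC l (G (k - l)) * kdotC (k - l) (F l))]
  apply tsum_congr
  intro l
  simp only [Equiv.subLeft_apply, sub_sub_cancel]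
  ring

/-- Remark 6.8 (ii): for `v₀, c₀ ∈ ℍ^∞`,
`(v₀·∇)c₀ = (c₀·∇)v₀  ⟺  𝒫(v₀,c₀) = 𝒫(c₀,v₀)`. -/
theorem adv_symm_iff_Pns_symm
    (d : ℕ) (hd : 2 ≤ d) (F G : Coef d) (hF : memHinf F) (hG : memHinf G) :
    (∀ k i, advC F G k i = advC G F k i) ↔ (∀ k i, Pns F G k i = Pns G F k i) := by
  constructor
  · intro h k i
    have hk : advC F G k = advC G F k := funext (h k)
    rw [Pns, Pns, hk]
  · intro h k i
    have hl : leray k (advC F G k) i = leray k (advC G F k) i := by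
      have := h k i
      rw [Pns, Pns] at this
      exact neg_injective this
    have hkd := kdot_advC_symm hF hG k
    by_cases hk : k = 0
    · subst hk
      rw [leray, if_pos rfl, leray, if_pos rfl] at hl
      exact hl
    · rw [leray, if_neg hk, leray, if_neg hk, hkd] at hl
      exact sub_left_inj.mp hl
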